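/- Let u_1, …, u_n be positive integers and let t and k be positive integers with 0 < t ≤ u_1 + … + u_n. Set T = 3·(u_1 + … + u_n). Let E be the PB instance with projects C = {x_1,…,x_n} ∪ {y_1,…,y_{2k+1}} ∪ {d_1,…,d_{k+1}} ∪ {p}, costs cost(x_i) = T + u_i, cost(y_j) = T, cost(d_j) = T − t + 1, cost(p) = T − t, a single voter who approves exactly the projects in C ∖ {x_1,…,x_n}, budget B = (k+1)T, and GreedyAV run with the tie-breaking order x_1 ≻ … ≻ x_n ≻ y_1 ≻ … ≻ y_{2k+1} ≻ d_1 ≻ … ≻ d_{k+1} ≻ p. For any X' ⊆ {x_1,…,x_n} and any R ⊆ {y_1,…,y_{2k+1}} ∪ {d_1,…,d_{k+1}} with |X'| + |R| ≤ k, let E' be obtained from E by adding the voter's approval of every project in X' and removing the voter's approval of every project in R. Then p ∈ GreedyAV(E') if and only if Σ_{i : x_i ∈ X'} u_i = t. -/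

import Mathlib

structure PB (C V : Type) [Fintype C] [DecidableEq C] [Fintype V] [DecidableEq V] where
  A : V → Finset C
  budget : ℕ
  cost : C → ℕ

namespace PB

variable {C V : Type} [Fintype C] [DecidableEq C] [Fintype V] [DecidableEq V]

/-- The approval score of a project: the number of voters approving it. -/
def score (E : PB C V) (c : C) : ℕ :=
  (Finset.univ.filter fun v => c ∈ E.A v).card

/-- Perform the approval flips in `F`: voter `v`'s approval set becomes
`A v ∆ {c : (v, c) ∈ F}`. -/
def flip (E : PB C V) (F : Finset (V × C)) : PB C V :=
  { E with A := fun v => symmDiff (E.A v) ((F.filter fun q => q.1 = v).image Prod.snd) }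

/-- Greedily process the given list of projects: starting from `W = ∅`,
add the currently considered project whenever it fits in the budget. -/
def greedyFold (budget : ℕ) (cost : C → ℕ) (order : List C) : Finset C :=
  order.foldl (fun W c => if (∑ x ∈ W, cost x) + cost c ≤ budget then insert c W else W) ∅

/-- The order in which GreedyAV considers the projects: non-increasing approval
score, ties broken in favor of `prec`-earlier projects. -/
noncomputable def consOrderAV (E : PB C V) (prec : C → C → Bool) : List C :=
  (Finset.univ : Finset C).toList.mergeSort fun c c' =>
    decide (E.score c' < E.score c) ||
      (decide (E.score c = E.score c') && (prec c c' || decide (c = c')))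

/-- GreedyAV with tie-breaking given by the strict relation `prec`. -/
noncomputable def greedyAV (E : PB C V) (prec : C → C → Bool) : Finset C :=
  greedyFold E.budget E.cost (consOrderAV E prec)

/-- The order in which GreedyCost considers the projects: non-increasing
approval-score-to-cost ratio (compared by cross-multiplication), ties broken in
favor of `prec`-earlier projects. -/
noncomputable def consOrderCost (E : PB C V) (prec : C → C → Bool) : List C :=
  (Finset.univ : Finset C).toList.mergeSort fun c c' =>
    decide (E.score c' * E.cost c < E.score c * E.cost c') ||
      (decide (E.score c * E.cost c' = E.score c' * E.cost c) && (prec c c' || decide (c = c')))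

/-- GreedyCost with tie-breaking given by the strict relation `prec`. -/
noncomputable def greedyCost (E : PB C V) (prec : C → C → Bool) : Finset C :=
  greedyFold E.budget E.cost (consOrderCost E prec)

/-- Cheaper-first tie-breaking: ties in approval score are broken in favor of
the cheaper project, with remaining ties broken by the residual order `prec0`. -/
def cheaperFirst (cost : C → ℕ) (prec0 : C → C → Bool) : C → C → Bool :=
  fun c c' => decide (cost c < cost c') || (decide (cost c = cost c') && prec0 c c')

end PB

/-! Statement 0: the correctness of the reduction from Sized Subset Sum to
GreedyAV-Flip-Bribery (Theorem `greedy-av-pb-npc`). -/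

/-- The projects of the reduction: `x_1, …, x_n`, `y_1, …, y_{2k+1}`,
`d_1, …, d_{k+1}`, and `p`. -/
abbrev Proj (n k : ℕ) := (Fin n ⊕ Fin (2 * k + 1)) ⊕ (Fin (k + 1) ⊕ Unit)

/-- The preferred project `p`. -/
def pProj (n k : ℕ) : Proj n k := Sum.inr (Sum.inr ())

/-- Ranks realizing the tie-breaking order `x_1 ≻ … ≻ x_n ≻ y_1 ≻ … ≻ y_{2k+1}
≻ d_1 ≻ … ≻ d_{k+1} ≻ p` (smaller rank = earlier). -/
def rank0 (n k : ℕ) : Proj n k → ℕ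
  | .inl (.inl i) => i
  | .inl (.inr j) => n + j
  | .inr (.inl j) => n + (2 * k + 1) + j
  | .inr (.inr _) => n + (2 * k + 1) + (k + 1)

/-- The costs: `cost(x_i) = T + u_i`, `cost(y_j) = T`, `cost(d_j) = T - t + 1`,
`cost(p) = T - t`, where `T = 3·(u_1 + … + u_n)`. -/
def cost0 {n : ℕ} (u : Fin n → ℕ) (t k : ℕ) : Proj n k → ℕ
  | .inl (.inl i) => 3 * (∑ j, u j) + u i
  | .inl (.inr _) => 3 * (∑ j, u j)
  | .inr (.inl _) => 3 * (∑ j, u j) - t + 1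
  | .inr (.inr _) => 3 * (∑ j, u j) - t

/-- Is a project one of the `x_i`? -/
def isX {n k : ℕ} : Proj n k → Bool
  | .inl (.inl _) => true
  | _ => false

/-- The PB instance of the reduction: a single voter approving everything
except the `x_i`, and budget `(k+1)·T`. -/
def E0 {n : ℕ} (u : Fin n → ℕ) (t k : ℕ) : PB (Proj n k) Unit where
  A := fun _ => Finset.univ.filter fun c => isX c = false
  budget := (k + 1) * (3 * ∑ j, u j)
  cost := cost0 u t k

/-- Is a project one of the `y_j`? -/
def isY {n k : ℕ} : Proj n k → Prop := fun c => ∃ j, c = Sum.inl (Sum.inr j)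

/-- Is a project one of the `d_j`? -/
def isD {n k : ℕ} : Proj n k → Prop := fun c => ∃ j, c = Sum.inr (Sum.inl j)

/-! With a single voter, GreedyAV first considers the approved projects in tie-breaking order:
the bought `x_i` (`i ∈ S`), then the remaining `y_j`, then the remaining `d_j`, and then `p`; at
least `k + 1` of the `y_j` and one `d_j` survive the bribery. All bought `x_i` fit, spending
`|S|·T + σ` with `σ = ∑_{i ∈ S} u_i ≤ T/3`. If `S = ∅`, then `k + 1` of the `y_j` exhaust the
budget. Otherwise exactly `k - |S|` of the `y_j` fit, leaving `T - σ`. If `σ < t`, one `d_j`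
(of cost `T - t + 1`) still fits, after which `p` does not since `T ≥ 3t`; if `σ ≥ t`, no `d_j`
fits and `p` (of cost `T - t`) fits exactly when `σ ≤ t`. -/

theorem List.length_sub_card_le_length_filter_notMem {α β : Type*} [DecidableEq β] {f : α → β}
    (hf : Function.Injective f) {l : List α} (hl : l.Nodup) (R : Finset β) :
    l.length - R.card ≤ (l.filter (f · ∉ R)).length := by
  have hin : (l.filter (f · ∈ R)).length ≤ R.card := by
    have hnd : ((l.filter (f · ∈ R)).map f).Nodup := (hl.filter _).map hf
    rw [← List.length_map f, ← List.toFinset_card_of_nodup hnd]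
    refine Finset.card_le_card fun b hb => ?_
    obtain ⟨a, ha, rfl⟩ := List.mem_map.mp (List.mem_toFinset.mp hb)
    exact of_decide_eq_true (List.mem_filter.mp ha).2
  have hsplit := List.length_eq_length_filter_add (l := l) (f · ∈ R)
  simp only [← decide_not] at hsplit
  omega

theorem List.sum_map_filter_mem_finRange {n : ℕ} {M : Type*} [AddCommMonoid M]
    (S : Finset (Fin n)) (f : Fin n → M) : (((List.finRange n).filter (· ∈ S)).map f).sum = ∑ i ∈ S, f i := by
  rw [← List.sum_toFinset _ ((List.nodup_finRange n).filter _)]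
  congr 1
  ext i
  simp

namespace PB

section GreedySpent

variable (budget : ℕ)

def greedySpent (spent : ℕ) (costs : List ℕ) : ℕ :=
  costs.foldl (fun w c => if w + c ≤ budget then w + c else w) spent

theorem greedySpent_append (w : ℕ) (l₁ l₂ : List ℕ) :
    greedySpent budget w (l₁ ++ l₂) = greedySpent budget (greedySpent budget w l₁) l₂ :=
  List.foldl_append

variable {budget}

theorem greedySpent_of_add_sum_le {w : ℕ} {l : List ℕ} (h : w + l.sum ≤ budget) :
    greedySpent budget w l = w + l.sum := by
  induction l generalizing w with
  | nil => rfl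
  | cons c l ih =>
    rw [List.sum_cons] at h
    simp only [greedySpent, List.foldl_cons, if_pos (show w + c ≤ budget by omega)]
    rw [List.sum_cons, ← add_assoc]
    exact ih (by omega)

theorem greedySpent_of_forall_lt {w : ℕ} {l : List ℕ} (h : ∀ c ∈ l, budget < w + c) :
    greedySpent budget w l = w := by
  induction l with
  | nil => rfl
  | cons c l ih =>
    simp only [greedySpent, List.foldl_cons, if_neg (not_le.mpr (h c List.mem_cons_self))]
    exact ih fun c' hc' => h c' (List.mem_cons_of_mem c hc')

theorem greedySpent_replicate {w m q c : ℕ} (hq : q ≤ m) (hfit : w + q * c ≤ budget)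
    (hfull : budget < w + q * c + c) :
    greedySpent budget w (List.replicate m c) = w + q * c := by
  obtain ⟨r, rfl⟩ := Nat.exists_eq_add_of_le hq
  have hsum : (List.replicate q c).sum = q * c := by simp
  have hfirst : greedySpent budget w (List.replicate q c) = w + q * c := by
    rw [greedySpent_of_add_sum_le (hsum ▸ hfit), hsum]
  rw [List.replicate_add, greedySpent_append, hfirst]
  refine greedySpent_of_forall_lt fun c' hc' => ?_
  rw [List.eq_of_mem_replicate hc']
  exact hfull

end GreedySpent

section GreedyFold

variable {C : Type} [DecidableEq C] (budget : ℕ) (cost : C → ℕ)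

def greedyStep (W : Finset C) (c : C) : Finset C :=
  if (∑ x ∈ W, cost x) + cost c ≤ budget then insert c W else W

theorem greedyFold_eq_foldl (l : List C) :
    greedyFold budget cost l = l.foldl (greedyStep budget cost) ∅ :=
  rfl

variable {budget cost}

theorem mem_foldl_greedyStep_iff_of_notMem {p : C} {l : List C} {W : Finset C} (hp : p ∉ l) :
    p ∈ l.foldl (greedyStep budget cost) W ↔ p ∈ W := by
  induction l generalizing W with
  | nil => rfl
  | cons c l ih =>
    rw [List.mem_cons, not_or] at hp
    rw [List.foldl_cons, ih hp.2, greedyStep]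
    split_ifs <;> simp [hp.1]

theorem sum_foldl_greedyStep {l : List C} {W : Finset C} (hl : l.Nodup)
    (hW : ∀ c ∈ l, c ∉ W) :
    ∑ x ∈ l.foldl (greedyStep budget cost) W, cost x =
      greedySpent budget (∑ x ∈ W, cost x) (l.map cost) := by
  induction l generalizing W with
  | nil => rfl
  | cons c l ih =>
    rw [List.nodup_cons] at hl
    have hcW : c ∉ W := hW c List.mem_cons_self
    rw [List.foldl_cons, List.map_cons, greedySpent, List.foldl_cons, ← greedySpent, greedyStep]
    split_ifs with hfit
    · rw [ih hl.2, Finset.sum_insert hcW, add_comm]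
      intro x hx
      rw [Finset.mem_insert, not_or]
      exact ⟨fun h => hl.1 (h ▸ hx), hW x (List.mem_cons_of_mem c hx)⟩
    · exact ih hl.2 fun x hx => hW x (List.mem_cons_of_mem c hx)

theorem mem_greedyFold_append_cons_iff {s t : List C} {p : C} (h : (s ++ p :: t).Nodup) :
    p ∈ greedyFold budget cost (s ++ p :: t) ↔
      greedySpent budget 0 (s.map cost) + cost p ≤ budget := by
  rw [List.nodup_append, List.nodup_cons] at h
  obtain ⟨hs, ⟨hpt, -⟩, hdisj⟩ := h
  have hps : p ∉ s := fun hp => hdisj p hp p List.mem_cons_self rfl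
  rw [greedyFold_eq_foldl, List.foldl_append, List.foldl_cons, mem_foldl_greedyStep_iff_of_notMem hpt,
    greedyStep, sum_foldl_greedyStep hs fun _ _ => Finset.notMem_empty _, Finset.sum_empty]
  have hnot : p ∉ s.foldl (greedyStep budget cost) ∅ := by
    rw [mem_foldl_greedyStep_iff_of_notMem hps]; exact Finset.notMem_empty p
  split_ifs with hfit
  · exact iff_of_true (Finset.mem_insert_self _ _) hfit
  · exact iff_of_false hnot hfit

end GreedyFold

section ConsOrder

variable {C V : Type} [Fintype C] [DecidableEq C] [Fintype V] [DecidableEq V]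

theorem consOrderAV_eq_of_pairwise (E : PB C V) {r : C → ℕ} (hr : Function.Injective r)
    {L : List C} (hL : L.Perm Finset.univ.toList)
    (hsorted : L.Pairwise fun c c' =>
      E.score c' < E.score c ∨ E.score c = E.score c' ∧ r c < r c') :
    consOrderAV E (fun c c' => decide (r c < r c')) = L := by
  let key : C → Lex (ℕᵒᵈ × ℕ) := fun c => toLex (OrderDual.toDual (E.score c), r c)
  have hkey : Function.Injective key := fun c c' h => hr (congrArg (fun x => (ofLex x).2) h)
  have hle : ∀ c c', (decide (E.score c' < E.score c) || (decide (E.score c = E.score c') &&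
      (decide (r c < r c') || decide (c = c')))) = true ↔ key c ≤ key c' := by
    intro c c'
    rw [Prod.Lex.le_iff]
    simp only [Bool.or_eq_true, Bool.and_eq_true, decide_eq_true_eq, ← hr.eq_iff, key,
      ofLex_toLex, OrderDual.toDual_lt_toDual, OrderDual.toDual_inj, Nat.le_iff_lt_or_eq]
  have hlt : ∀ c c', (E.score c' < E.score c ∨ E.score c = E.score c' ∧ r c < r c') →
      key c < key c' := by
    intro c c' h
    simpa only [Prod.Lex.lt_iff, key, ofLex_toLex, OrderDual.toDual_lt_toDual,
      OrderDual.toDual_inj] using h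
  refine (List.mergeSort_perm _ _).trans hL.symm |>.eq_of_pairwise
    (fun a b _ _ hab hba => hkey (le_antisymm hab hba)) ?_ (hsorted.imp fun h => (hlt _ _ h).le)
  refine (List.pairwise_mergeSort (fun a b c hab hbc => ?_) (fun a b => ?_) _).imp
    fun h => (hle _ _).mp h
  · exact (hle _ _).mpr (((hle _ _).mp hab).trans ((hle _ _).mp hbc))
  · rcases le_total (key a) (key b) with h | h
    · simp only [(hle a b).mpr h, Bool.true_or]
    · simp only [(hle b a).mpr h, Bool.or_true]

theorem nodup_consOrderAV (E : PB C V) (prec : C → C → Bool) : (consOrderAV E prec).Nodup :=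
  (List.mergeSort_perm _ _).nodup_iff.mpr (Finset.nodup_toList _)

end ConsOrder

section SingleVoter

variable {C : Type} [Fintype C] [DecidableEq C]

theorem score_eq_ite (E : PB C Unit) (c : C) : E.score c = if c ∈ E.A () then 1 else 0 := by
  by_cases h : c ∈ E.A () <;> simp [score, h]

theorem consOrderAV_eq_filter_append_filter (E : PB C Unit) {r : C → ℕ} {L : List C}
    (hmem : ∀ c, c ∈ L) (hsorted : L.Pairwise (r · < r ·)) :
    consOrderAV E (fun c c' => decide (r c < r c')) =
      L.filter (· ∈ E.A ()) ++ L.filter (· ∉ E.A ()) := by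
  have hr : Function.Injective r := by
    have : Std.Symm fun a b : C => r a ≠ r b := ⟨fun _ _ h => h.symm⟩
    intro c c' h
    by_contra hne
    exact (hsorted.imp Nat.ne_of_lt).forall (hmem c) (hmem c') hne h
  have hL : L.Perm Finset.univ.toList :=
    List.perm_of_nodup_nodup_toFinset_eq (hsorted.imp fun h => hr.ne_iff.mp (Nat.ne_of_lt h))
      (Finset.nodup_toList _) (by ext c; simp [hmem c])
  have hfilter : L.filter (· ∉ E.A ()) = L.filter fun c => !decide (c ∈ E.A ()) := by
    simp only [decide_not]
  refine consOrderAV_eq_of_pairwise E hr (hfilter ▸ (List.filter_append_perm _ L).trans hL) ?_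
  rw [List.pairwise_append, List.pairwise_filter, List.pairwise_filter]
  refine ⟨hsorted.imp fun h hc hc' => Or.inr ⟨?_, h⟩,
    hsorted.imp fun h hc hc' => Or.inr ⟨?_, h⟩, fun c hc c' hc' => Or.inl ?_⟩ <;>
  simp_all [score_eq_ite]

end SingleVoter

end PB

section Reduction

open PB

variable {n k : ℕ}

def xProj (i : Fin n) : Proj n k := .inl (.inl i)

def yProj (j : Fin (2 * k + 1)) : Proj n k := .inl (.inr j)

def dProj (j : Fin (k + 1)) : Proj n k := .inr (.inl j)

theorem yProj_injective : Function.Injective (yProj : Fin (2 * k + 1) → Proj n k) :=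
  fun _ _ h => by simpa [yProj] using h

theorem dProj_injective : Function.Injective (dProj : Fin (k + 1) → Proj n k) :=
  fun _ _ h => by simpa [dProj] using h

def bribed (u : Fin n → ℕ) (t : ℕ) (S : Finset (Fin n)) (R : Finset (Proj n k)) :
    PB (Proj n k) Unit :=
  { E0 u t k with A := fun _ => ((E0 u t k).A () ∪ S.image xProj) \ R }

def projList (n k : ℕ) : List (Proj n k) :=
  (List.finRange n).map xProj ++ (List.finRange (2 * k + 1)).map yProj ++
    (List.finRange (k + 1)).map dProj ++ [pProj n k]

def boughtX (S : Finset (Fin n)) : List (Proj n k) :=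
  ((List.finRange n).filter (· ∈ S)).map xProj

def keptY (R : Finset (Proj n k)) : List (Proj n k) :=
  ((List.finRange (2 * k + 1)).filter (yProj · ∉ R)).map yProj

def keptD (R : Finset (Proj n k)) : List (Proj n k) :=
  ((List.finRange (k + 1)).filter (dProj · ∉ R)).map dProj

theorem mem_projList (c : Proj n k) : c ∈ projList n k := by
  rcases c with (i | j) | (j | ⟨⟩) <;> simp [projList, xProj, yProj, dProj, pProj]

theorem pairwise_rank0_projList : (projList n k).Pairwise (rank0 n k · < rank0 n k ·) := by
  simp only [rank0, projList, xProj, yProj, dProj, List.append_assoc, pProj, List.pairwise_append,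
    List.pairwise_map, Fin.val_fin_lt, List.pairwise_lt_finRange, add_lt_add_iff_left,
    List.pairwise_cons, List.not_mem_nil, IsEmpty.forall_iff, implies_true, List.Pairwise.nil,
    and_self, List.mem_map, List.mem_finRange, true_and, List.mem_cons, or_false, forall_eq,
    forall_exists_index, forall_apply_eq_imp_iff, List.mem_append, or_imp, forall_and]
  and_intros <;> intros <;> omega

theorem filter_projList_mem_bribed {u : Fin n → ℕ} {t : ℕ} {S : Finset (Fin n)}
    {R : Finset (Proj n k)} (hR : ∀ c ∈ R, isY c ∨ isD c) :
    (projList n k).filter (· ∈ (bribed u t S R).A ()) =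
      boughtX S ++ keptY R ++ keptD R ++ [pProj n k] := by
  have hnot : ∀ c, ¬ (isY c ∨ isD c) → c ∉ R := fun c hc hcR => hc (hR c hcR)
  simp only [bribed, E0, projList, boughtX, keptY, keptD, List.filter_append, List.filter_map, Function.comp_def,
    Finset.mem_sdiff, Finset.mem_union, Finset.mem_filter, Finset.mem_univ, true_and,
    Finset.mem_image]
  simp only [isX, xProj, Bool.true_eq_false, Sum.inl.injEq, exists_eq_right, false_or, isY,
    reduceCtorEq, exists_const, isD, or_self, not_false_eq_true, hnot, and_true, yProj, and_false,
    exists_false, or_false, true_and, decide_not, dProj, List.append_assoc, pProj, Sum.inr.injEq,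
    and_self, decide_true, List.filter_cons_of_pos, List.filter_nil, List.append_cancel_left_eq]
  congr! with j j <;> exact decide_not.symm

theorem mem_greedyAV_bribed_iff {u : Fin n → ℕ} {t : ℕ} {S : Finset (Fin n)}
    {R : Finset (Proj n k)} (hR : ∀ c ∈ R, isY c ∨ isD c) :
    pProj n k ∈ greedyAV (bribed u t S R) (fun c c' => decide (rank0 n k c < rank0 n k c')) ↔
      greedySpent ((k + 1) * (3 * ∑ i, u i)) 0
          ((boughtX S ++ keptY R ++ keptD R).map (cost0 u t k)) + (3 * ∑ i, u i - t) ≤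
        (k + 1) * (3 * ∑ i, u i) := by
  have horder := (consOrderAV_eq_filter_append_filter (bribed u t S R) mem_projList
    pairwise_rank0_projList).trans (congrArg (· ++ _) (filter_projList_mem_bribed hR))
  simp only [List.append_assoc, List.singleton_append] at horder
  have hnodup := nodup_consOrderAV (bribed u t S R) fun c c' => decide (rank0 n k c < rank0 n k c')
  rw [horder, ← List.append_assoc, ← List.append_assoc] at hnodup
  rw [greedyAV, horder, ← List.append_assoc, ← List.append_assoc,
    mem_greedyFold_append_cons_iff hnodup]
  rfl

theorem sum_map_cost0_boughtX (u : Fin n → ℕ) (t : ℕ) (S : Finset (Fin n)) :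
    ((boughtX S).map (cost0 u t k)).sum = S.card * (3 * ∑ i, u i) + ∑ i ∈ S, u i := by
  rw [boughtX, List.map_map, List.sum_map_filter_mem_finRange]
  change ∑ i ∈ S, (3 * ∑ i, u i + u i) = _
  rw [Finset.sum_add_distrib, Finset.sum_const, smul_eq_mul]

theorem map_cost0_keptY (u : Fin n → ℕ) (t : ℕ) (R : Finset (Proj n k)) :
    (keptY R).map (cost0 u t k) = List.replicate (keptY R).length (3 * ∑ i, u i) := by
  simp only [keptY, List.map_map, List.length_map]
  exact List.map_const'

theorem map_cost0_keptD (u : Fin n → ℕ) (t : ℕ) (R : Finset (Proj n k)) :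
    (keptD R).map (cost0 u t k) = List.replicate (keptD R).length (3 * ∑ i, u i - t + 1) := by
  simp only [keptD, List.map_map, List.length_map]
  exact List.map_const'

theorem succ_le_length_keptY {R : Finset (Proj n k)} (hR : R.card ≤ k) :
    k + 1 ≤ (keptY R).length := by
  have := List.length_sub_card_le_length_filter_notMem yProj_injective
    (List.nodup_finRange (2 * k + 1)) R
  rw [List.length_finRange] at this
  rw [keptY, List.length_map]
  omega

theorem length_keptD_pos {R : Finset (Proj n k)} (hR : R.card ≤ k) : 0 < (keptD R).length := by
  have := List.length_sub_card_le_length_filter_notMem dProj_injective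
    (List.nodup_finRange (k + 1)) R
  rw [List.length_finRange] at this
  rw [keptD, List.length_map]
  omega

end Reduction

open PB in
theorem greedySpent_reduction_add_le_iff {T t σ s k mY mD : ℕ} {xs : List ℕ}
    (ht : 0 < t) (htT : 3 * t ≤ T) (hσT : σ ≤ T) (hs : s ≤ k) (hσ : σ = 0 ↔ s = 0)
    (hmY : k + 1 ≤ mY) (hmD : 1 ≤ mD) (hxs : xs.sum = s * T + σ) :
    greedySpent ((k + 1) * T) 0 (xs ++ List.replicate mY T ++ List.replicate mD (T - t + 1)) +
        (T - t) ≤ (k + 1) * T ↔ σ = t := by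
  have hB : (k + 1) * T = k * T + T := Nat.succ_mul k T
  have hsk : s * T + (k - s) * T = k * T := by rw [← add_mul, Nat.add_sub_cancel' hs]
  have hxfit : s * T + σ ≤ (k + 1) * T := by
    have := Nat.mul_le_mul_right T hs
    omega
  have hx : greedySpent ((k + 1) * T) 0 xs = s * T + σ := by
    rw [greedySpent_of_add_sum_le (by omega), hxs, zero_add]
  rw [greedySpent_append, greedySpent_append, hx]
  rcases Nat.eq_zero_or_pos s with rfl | hspos
  · obtain rfl : σ = 0 := hσ.mpr rfl
    have hy : greedySpent ((k + 1) * T) (0 * T + 0) (List.replicate mY T) = (k + 1) * T := by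
      rw [greedySpent_replicate hmY (by omega) (by omega)]
      omega
    rw [hy, greedySpent_of_forall_lt (by simp only [List.mem_replicate]; omega)]
    omega
  · have hσpos : 0 < σ := Nat.pos_of_ne_zero fun h => hspos.ne' (hσ.mp h)
    have hy : greedySpent ((k + 1) * T) (s * T + σ) (List.replicate mY T) = k * T + σ := by
      rw [greedySpent_replicate (q := k - s) (by omega) (by omega) (by omega)]
      omega
    rw [hy]
    rcases Nat.lt_or_ge σ t with hσt | hσt
    · rw [greedySpent_replicate (q := 1) hmD (by omega) (by omega)]
      omega
    · rw [greedySpent_of_forall_lt (by simp only [List.mem_replicate]; omega)]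
      omega

theorem stmt1_general (n k t : ℕ) (u : Fin n → ℕ) (hu : ∀ i, 0 < u i)
    (ht : 0 < t) (htsum : t ≤ ∑ i, u i)
    (S : Finset (Fin n)) (R : Finset (Proj n k))
    (hR : ∀ c ∈ R, isY c ∨ isD c)
    (hcard : S.card + R.card ≤ k) :
    pProj n k ∈ PB.greedyAV
        ({ E0 u t k with
            A := fun _ =>
              ((E0 u t k).A () ∪ S.image fun i => (Sum.inl (Sum.inl i) : Proj n k)) \ R } :
          PB (Proj n k) Unit)
        (fun c c' => decide (rank0 n k c < rank0 n k c')) ↔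
      ∑ i ∈ S, u i = t := by
  change pProj n k ∈ PB.greedyAV (bribed u t S R) _ ↔ _
  have hσT : ∑ i ∈ S, u i ≤ 3 * ∑ i, u i := by
    have := Finset.sum_le_sum_of_subset (f := u) (Finset.subset_univ S)
    omega
  have hσ : ∑ i ∈ S, u i = 0 ↔ S.card = 0 := by
    simp [Finset.sum_eq_zero_iff, (hu _).ne', Finset.eq_empty_iff_forall_notMem]
  rw [mem_greedyAV_bribed_iff hR, List.map_append, List.map_append, map_cost0_keptY,
    map_cost0_keptD]
  exact greedySpent_reduction_add_le_iff ht (by omega) hσT (by omega) hσ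
    (succ_le_length_keptY (by omega)) (length_keptD_pos (by omega)) (sum_map_cost0_boughtX u t S)

theorem stmt1 (n k t : ℕ) (u : Fin n → ℕ) (hu : ∀ i, 0 < u i)
    (ht : 0 < t) (hk : 0 < k) (htsum : t ≤ ∑ i, u i)
    (S : Finset (Fin n)) (R : Finset (Proj n k))
    (hR : ∀ c ∈ R, isY c ∨ isD c)
    (hcard : S.card + R.card ≤ k) :
    pProj n k ∈ PB.greedyAV
        ({ E0 u t k with
            A := fun _ =>
              ((E0 u t k).A () ∪ S.image fun i => (Sum.inl (Sum.inl i) : Proj n k)) \ R } :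
          PB (Proj n k) Unit)
        (fun c c' => decide (rank0 n k c < rank0 n k c')) ↔
      ∑ i ∈ S, u i = t :=
  stmt1_general n k t u hu ht htsum S R hR hcard
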